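/- Let n ≥ 1 and 0 ≤ b ≤ n−1 be integers. Then for all bit strings σ, τ ∈ {0,1}^n, the entrywise difference between the AQFT and the exact QFT/DFT tensor satisfies |F_{n,b}(σ_{1:n}, τ_{1:n}) − F(σ_{1:n}, τ_{1:n})| ≤ π·n·2^{−b}. -/

import Mathlib

/-- The DFT/QFT tensor `F(σ,τ) = exp(−πi Σ_{k,l=1}^n 2^{−k} 2^{l} σ_k τ_l)`. -/
noncomputable def dftF (n : ℕ) (σ τ : Fin n → Fin 2) : ℂ :=
  Complex.exp (-(Real.pi : ℂ) * Complex.I *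
    ((∑ k : Fin n, ∑ l : Fin n,
      (2 : ℝ) ^ ((l : ℕ) + 1) / (2 : ℝ) ^ ((k : ℕ) + 1) *
        ((σ k : ℕ) : ℝ) * ((τ l : ℕ) : ℝ) : ℝ) : ℂ))

/-- The AQFT tensor with approximation level `b`:
`F_{n,b}(σ,τ) = exp(−πi Σ_{k=1}^n Σ_{l=max(1,k−b)}^n 2^{−k} 2^{l} σ_k τ_l)`. -/
noncomputable def Faqft (m b : ℕ) (σ τ : Fin m → Fin 2) : ℂ :=
  Complex.exp (-(Real.pi : ℂ) * Complex.I *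
    ((∑ k : Fin m, ∑ l ∈ Finset.univ.filter
        (fun l : Fin m => max 1 ((k : ℕ) + 1 - b) ≤ (l : ℕ) + 1),
      (2 : ℝ) ^ ((l : ℕ) + 1) / (2 : ℝ) ^ ((k : ℕ) + 1) *
        ((σ k : ℕ) : ℝ) * ((τ l : ℕ) : ℝ) : ℝ) : ℂ))

lemma my_abs_exp_mul_I_sub_one_le (θ : ℝ) :
    ‖Complex.exp (θ * Complex.I) - 1‖ ≤ |θ| := by
  have hsq : ‖Complex.exp (θ * Complex.I) - 1‖ ^ 2 = 2 - 2 * Real.cos θ := by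
    rw [Complex.sq_norm, Complex.normSq_apply]
    simp only [Complex.sub_re, Complex.sub_im, Complex.exp_ofReal_mul_I_re,
      Complex.exp_ofReal_mul_I_im, Complex.one_re, Complex.one_im]
    nlinarith [Real.sin_sq_add_cos_sq θ]
  have hcos := Real.one_sub_sq_div_two_le_cos (x := θ)
  nlinarith [norm_nonneg (Complex.exp (θ * Complex.I) - 1), abs_nonneg θ,
    sq_abs θ]

lemma my_abs_exp_sub_exp_le (a c : ℝ) :
    ‖Complex.exp (a * Complex.I) - Complex.exp (c * Complex.I)‖ ≤ |a - c| := by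
  have h : Complex.exp (a * Complex.I) - Complex.exp (c * Complex.I)
      = Complex.exp (c * Complex.I) * (Complex.exp (((a - c : ℝ)) * Complex.I) - 1) := by
    rw [mul_sub, ← Complex.exp_add]
    push_cast
    ring_nf
  rw [h, norm_mul, Complex.norm_exp_ofReal_mul_I, one_mul]
  exact my_abs_exp_mul_I_sub_one_le _

lemma inner_sum_bound (n b : ℕ) (k : Fin n) (σ τ : Fin n → Fin 2) :
    ∑ l ∈ Finset.univ.filter
        (fun l : Fin n => ¬ (max 1 ((k : ℕ) + 1 - b) ≤ (l : ℕ) + 1)),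
      (2 : ℝ) ^ ((l : ℕ) + 1) / (2 : ℝ) ^ ((k : ℕ) + 1) *
        ((σ k : ℕ) : ℝ) * ((τ l : ℕ) : ℝ) ≤ 1 / 2 ^ b := by
  have hterm : ∀ l : Fin n,
      (2 : ℝ) ^ ((l : ℕ) + 1) / (2 : ℝ) ^ ((k : ℕ) + 1) *
        ((σ k : ℕ) : ℝ) * ((τ l : ℕ) : ℝ)
      ≤ (2 : ℝ) ^ ((l : ℕ) + 1) / (2 : ℝ) ^ ((k : ℕ) + 1) := by
    intro l
    have h1 : ((σ k : ℕ) : ℝ) ≤ 1 := by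
      have := (σ k).2; exact_mod_cast Nat.lt_succ_iff.mp this
    have h2 : ((τ l : ℕ) : ℝ) ≤ 1 := by
      have := (τ l).2; exact_mod_cast Nat.lt_succ_iff.mp this
    have h1' : (0:ℝ) ≤ ((σ k : ℕ) : ℝ) := by positivity
    have h2' : (0:ℝ) ≤ ((τ l : ℕ) : ℝ) := by positivity
    have hp : (0:ℝ) < (2 : ℝ) ^ ((l : ℕ) + 1) / (2 : ℝ) ^ ((k : ℕ) + 1) := by positivity
    have hac : ((σ k : ℕ) : ℝ) * ((τ l : ℕ) : ℝ) ≤ 1 := mul_le_one₀ h1 h2' h2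
    calc (2 : ℝ) ^ ((l : ℕ) + 1) / (2 : ℝ) ^ ((k : ℕ) + 1) * ((σ k : ℕ) : ℝ) * ((τ l : ℕ) : ℝ)
        = (2 : ℝ) ^ ((l : ℕ) + 1) / (2 : ℝ) ^ ((k : ℕ) + 1) *
            (((σ k : ℕ) : ℝ) * ((τ l : ℕ) : ℝ)) := by ring
      _ ≤ (2 : ℝ) ^ ((l : ℕ) + 1) / (2 : ℝ) ^ ((k : ℕ) + 1) * 1 :=
          mul_le_mul_of_nonneg_left hac hp.le
      _ = (2 : ℝ) ^ ((l : ℕ) + 1) / (2 : ℝ) ^ ((k : ℕ) + 1) := mul_one _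
  calc ∑ l ∈ Finset.univ.filter
        (fun l : Fin n => ¬ (max 1 ((k : ℕ) + 1 - b) ≤ (l : ℕ) + 1)),
      (2 : ℝ) ^ ((l : ℕ) + 1) / (2 : ℝ) ^ ((k : ℕ) + 1) *
        ((σ k : ℕ) : ℝ) * ((τ l : ℕ) : ℝ)
      ≤ ∑ l ∈ Finset.univ.filter
        (fun l : Fin n => ¬ (max 1 ((k : ℕ) + 1 - b) ≤ (l : ℕ) + 1)),
      (2 : ℝ) ^ ((l : ℕ) + 1) / (2 : ℝ) ^ ((k : ℕ) + 1) :=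
        Finset.sum_le_sum (fun l _ => hterm l)
    _ = (∑ l ∈ Finset.univ.filter
        (fun l : Fin n => ¬ (max 1 ((k : ℕ) + 1 - b) ≤ (l : ℕ) + 1)),
      (2 : ℝ) ^ ((l : ℕ) + 1)) / (2 : ℝ) ^ ((k : ℕ) + 1) := by
        rw [Finset.sum_div]
    _ ≤ ((2 : ℝ) ^ ((k : ℕ) + 1) / 2 ^ b) / (2 : ℝ) ^ ((k : ℕ) + 1) := by
        gcongr ?_ / _
        · -- sum of powers bound
          have hconv : ∑ l ∈ Finset.univ.filter
              (fun l : Fin n => ¬ (max 1 ((k : ℕ) + 1 - b) ≤ (l : ℕ) + 1)),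
              (2 : ℝ) ^ ((l : ℕ) + 1)
              = ∑ j ∈ (Finset.range n).filter (fun j => j + b + 1 ≤ (k : ℕ)),
                (2 : ℝ) ^ (j + 1) := by
            rw [Finset.sum_filter, Finset.sum_filter]
            rw [← Fin.sum_univ_eq_sum_range
              (fun j => if j + b + 1 ≤ (k : ℕ) then (2:ℝ)^(j+1) else 0) n]
            refine Finset.sum_congr rfl (fun l _ => ?_)
            exact if_congr (by omega) rfl rfl
          rw [hconv]
          have hsub : (Finset.range n).filter (fun j => j + b + 1 ≤ (k : ℕ))
              ⊆ Finset.range ((k : ℕ) - b) := by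
            intro j hj
            simp only [Finset.mem_filter, Finset.mem_range] at hj ⊢
            omega
          calc ∑ j ∈ (Finset.range n).filter (fun j => j + b + 1 ≤ (k : ℕ)),
                (2 : ℝ) ^ (j + 1)
              ≤ ∑ j ∈ Finset.range ((k : ℕ) - b), (2 : ℝ) ^ (j + 1) :=
                Finset.sum_le_sum_of_subset_of_nonneg hsub (by intros; positivity)
            _ = 2 * ((2 : ℝ) ^ ((k : ℕ) - b) - 1) := by
                simp only [pow_succ, ← Finset.sum_mul]
                rw [geom_sum_eq (by norm_num : (2:ℝ) ≠ 1)]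
                norm_num
                ring
            _ ≤ (2 : ℝ) ^ ((k : ℕ) + 1) / 2 ^ b := by
                rcases le_or_gt b (k : ℕ) with h | h
                · have hAB : (2 : ℝ) ^ ((k : ℕ) - b) * 2 ^ b = 2 ^ (k : ℕ) := by
                    rw [← pow_add]; congr 1; omega
                  have h2b : (0:ℝ) < 2 ^ b := by positivity
                  have hk1 : (2:ℝ) ^ ((k : ℕ) + 1) = 2 ^ (k : ℕ) * 2 := pow_succ _ _
                  rw [le_div_iff₀ h2b]
                  nlinarith [hAB, h2b, hk1]
                · have : (k : ℕ) - b = 0 := by omega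
                  rw [this]
                  simp
                  positivity
    _ = 1 / 2 ^ b := by
        field_simp

/-- Entrywise error of the AQFT relative to the exact QFT/DFT tensor:
`|F_{n,b}(σ,τ) − F(σ,τ)| ≤ π·n·2^{−b}`. -/
theorem aqft_entrywise_error (n b : ℕ) (hn : 1 ≤ n) (hb : b ≤ n - 1)
    (σ τ : Fin n → Fin 2) :
    ‖Faqft n b σ τ - dftF n σ τ‖ ≤ Real.pi * (n : ℝ) / 2 ^ b := by
  set S1 : ℝ := ∑ k : Fin n, ∑ l ∈ Finset.univ.filter
        (fun l : Fin n => max 1 ((k : ℕ) + 1 - b) ≤ (l : ℕ) + 1),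
      (2 : ℝ) ^ ((l : ℕ) + 1) / (2 : ℝ) ^ ((k : ℕ) + 1) *
        ((σ k : ℕ) : ℝ) * ((τ l : ℕ) : ℝ) with hS1
  set S2 : ℝ := ∑ k : Fin n, ∑ l : Fin n,
      (2 : ℝ) ^ ((l : ℕ) + 1) / (2 : ℝ) ^ ((k : ℕ) + 1) *
        ((σ k : ℕ) : ℝ) * ((τ l : ℕ) : ℝ) with hS2
  have hF1 : Faqft n b σ τ = Complex.exp (((-Real.pi * S1 : ℝ) : ℂ) * Complex.I) := by
    rw [Faqft, ← hS1]; congr 1; push_cast; ring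
  have hF2 : dftF n σ τ = Complex.exp (((-Real.pi * S2 : ℝ) : ℂ) * Complex.I) := by
    rw [dftF, ← hS2]; congr 1; push_cast; ring
  rw [hF1, hF2]
  refine le_trans (my_abs_exp_sub_exp_le _ _) ?_
  have habs : (-Real.pi * S1) - (-Real.pi * S2) = Real.pi * (S2 - S1) := by ring
  rw [habs, abs_mul, abs_of_pos Real.pi_pos]
  -- S2 - S1 is the sum of omitted (nonneg) terms
  have hdiff : S2 - S1 = ∑ k : Fin n, ∑ l ∈ Finset.univ.filter
        (fun l : Fin n => ¬ (max 1 ((k : ℕ) + 1 - b) ≤ (l : ℕ) + 1)),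
      (2 : ℝ) ^ ((l : ℕ) + 1) / (2 : ℝ) ^ ((k : ℕ) + 1) *
        ((σ k : ℕ) : ℝ) * ((τ l : ℕ) : ℝ) := by
    rw [hS1, hS2, ← Finset.sum_sub_distrib]
    refine Finset.sum_congr rfl (fun k _ => ?_)
    have := Finset.sum_filter_add_sum_filter_not Finset.univ
      (fun l : Fin n => max 1 ((k : ℕ) + 1 - b) ≤ (l : ℕ) + 1)
      (fun l : Fin n => (2 : ℝ) ^ ((l : ℕ) + 1) / (2 : ℝ) ^ ((k : ℕ) + 1) *
        ((σ k : ℕ) : ℝ) * ((τ l : ℕ) : ℝ))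
    linarith
  have hnonneg : 0 ≤ S2 - S1 := by
    rw [hdiff]
    refine Finset.sum_nonneg (fun k _ => Finset.sum_nonneg (fun l _ => by positivity))
  rw [abs_of_nonneg hnonneg, hdiff]
  have hsum : ∑ k : Fin n, ∑ l ∈ Finset.univ.filter
        (fun l : Fin n => ¬ (max 1 ((k : ℕ) + 1 - b) ≤ (l : ℕ) + 1)),
      (2 : ℝ) ^ ((l : ℕ) + 1) / (2 : ℝ) ^ ((k : ℕ) + 1) *
        ((σ k : ℕ) : ℝ) * ((τ l : ℕ) : ℝ) ≤ (n : ℝ) * (1 / 2 ^ b) := by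
    calc _ ≤ ∑ _k : Fin n, (1 / 2 ^ b : ℝ) :=
          Finset.sum_le_sum (fun k _ => inner_sum_bound n b k σ τ)
      _ = (n : ℝ) * (1 / 2 ^ b) := by simp [mul_comm]
  calc Real.pi * ∑ k : Fin n, ∑ l ∈ Finset.univ.filter
        (fun l : Fin n => ¬ (max 1 ((k : ℕ) + 1 - b) ≤ (l : ℕ) + 1)),
      (2 : ℝ) ^ ((l : ℕ) + 1) / (2 : ℝ) ^ ((k : ℕ) + 1) *
        ((σ k : ℕ) : ℝ) * ((τ l : ℕ) : ℝ)
      ≤ Real.pi * ((n : ℝ) * (1 / 2 ^ b)) :=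
        mul_le_mul_of_nonneg_left hsum Real.pi_pos.le
    _ = Real.pi * (n : ℝ) / 2 ^ b := by ring
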